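/- Let D = ⟨R, C, ∅⟩ be a defeasible theory such that R_u = ∅ and the conflict sets of C are minimal (C = C_MIN), and let ⟨T_{D,WF}, F_{D,WF}⟩ be the well-founded model of D under ADL. For every p ∈ Lit(D): if there is a defeasible rule r ∈ R_d[p] with body(r) ⊆ T_{D,WF} and the complement p̄ of p satisfies p̄ ∈ F_{D,WF}, then p ∈ T_{D,WF}. -/

import Mathlib

namespace DLWFS

universe u

/-- Ground literals over a type `A` of atoms: atoms and their classical complements. -/
inductive Lit (A : Type u) : Type u where
  | pos : A → Lit A
  | neg : A → Lit A

/-- The classical complement `p̄` of a literal `p`. -/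
def Lit.compl {A : Type u} : Lit A → Lit A
  | .pos a => .neg a
  | .neg a => .pos a

/-- The three kinds of rules of a defeasible theory. -/
inductive RuleKind : Type where
  | strict
  | defeasible
  | defeater
deriving DecidableEq

/-- A rule of a defeasible theory: a kind, a body (a set of literals) and a head literal. -/
structure DRule (A : Type u) where
  kind : RuleKind
  body : Set (Lit A)
  head : Lit A

/-- A defeasible theory `D = ⟨R, C, ≺⟩`. -/
structure DTheory (A : Type u) where
  rules : Set (DRule A)
  conflicts : Set (Set (Lit A))
  prec : DRule A → DRule A → Prop

namespace DTheory

variable {A : Type u}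

/-- The strict rules `R_s`. -/
def Rs (D : DTheory A) : Set (DRule A) := {r ∈ D.rules | r.kind = RuleKind.strict}

/-- The defeasible rules `R_d`. -/
def Rd (D : DTheory A) : Set (DRule A) := {r ∈ D.rules | r.kind = RuleKind.defeasible}

/-- The defeater rules `R_u`. -/
def Ru (D : DTheory A) : Set (DRule A) := {r ∈ D.rules | r.kind = RuleKind.defeater}

/-- `C[p]`: the conflict sets containing literal `p`. -/
def Cset (D : DTheory A) (p : Lit A) : Set (Set (Lit A)) := {c ∈ D.conflicts | p ∈ c}

/-- Structural conditions in the definition of a defeasible theory: a countable set of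
rules with finite bodies, a countable set of finite conflict sets containing every
minimal conflict set `{p, ¬p}`, and an acyclic priority relation over non-strict rules. -/
def WellFormed (D : DTheory A) : Prop :=
  D.rules.Countable ∧ D.conflicts.Countable ∧
  (∀ r ∈ D.rules, r.body.Finite) ∧
  (∀ c ∈ D.conflicts, c.Finite) ∧
  (∀ p : A, ({Lit.pos p, Lit.neg p} : Set (Lit A)) ∈ D.conflicts) ∧
  (∀ r s, D.prec r s → r.kind ≠ RuleKind.strict ∧ s.kind ≠ RuleKind.strict) ∧
  (∀ r, ¬ Relation.TransGen D.prec r r)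

/-- `C = C_MIN`: the conflict sets are exactly the minimal ones `{p, ¬p}`. -/
def MinimalConflicts (D : DTheory A) : Prop :=
  D.conflicts = {c | ∃ p : A, c = ({Lit.pos p, Lit.neg p} : Set (Lit A))}

end DTheory

/-- A 3-valued interpretation: a pair `⟨T, F⟩` of sets. -/
abbrev Interp (L : Type u) : Type u := Set L × Set L

variable {A : Type u}

/-- `S` is ADL-unfounded with respect to theory `D` and interpretation `I = ⟨T, F⟩`. -/
def ADLUnfounded (D : DTheory A) (I : Interp (Lit A)) (S : Set (Lit A)) : Prop :=
  ∀ p ∈ S,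
    (∀ r ∈ D.Rs, r.head = p → (r.body ∩ (I.2 ∪ S)).Nonempty) ∧
    (∀ r ∈ D.Rd, r.head = p →
      (r.body ∩ (I.2 ∪ S)).Nonempty ∨
      ∃ c ∈ D.conflicts, p ∈ c ∧
        ∀ q ∈ c \ {p}, ∃ s ∈ D.rules, s.head = q ∧ s.body ⊆ I.1 ∧
          (D.prec r s ∨ s.kind = RuleKind.strict))

/-- `S` is NDL-unfounded with respect to theory `D` and interpretation `I = ⟨T, F⟩`. -/
def NDLUnfounded (D : DTheory A) (I : Interp (Lit A)) (S : Set (Lit A)) : Prop :=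
  ∀ p ∈ S,
    (∀ r ∈ D.Rs, r.head = p → (r.body ∩ (I.2 ∪ S)).Nonempty) ∧
    (∀ r ∈ D.Rd, r.head = p →
      (r.body ∩ (I.2 ∪ S)).Nonempty ∨
      ∃ c ∈ D.conflicts, p ∈ c ∧
        ∀ q ∈ c \ {p}, ∃ s ∈ D.rules, s.head = q ∧ s.body ⊆ I.1 ∧
          ¬ D.prec s r)

/-- `U_D(I)` for ADL: the union of all ADL-unfounded sets. -/
def UA (D : DTheory A) (I : Interp (Lit A)) : Set (Lit A) :=
  ⋃₀ {S | ADLUnfounded D I S}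

/-- `U_D(I)` for NDL: the union of all NDL-unfounded sets. -/
def UN (D : DTheory A) (I : Interp (Lit A)) : Set (Lit A) :=
  ⋃₀ {S | NDLUnfounded D I S}

/-- `T_D(I)`: the literals having a witness of provability with respect to `I = ⟨T, F⟩`. -/
def TD (D : DTheory A) (I : Interp (Lit A)) : Set (Lit A) :=
  {p | ∃ r ∈ D.rules, r.head = p ∧ r.body ⊆ I.1 ∧
    (r.kind = RuleKind.strict ∨
      (r.kind = RuleKind.defeasible ∧
        ∀ c ∈ D.conflicts, p ∈ c →
          ∃ q ∈ c \ {p}, ∀ s ∈ D.rules, s.head = q →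
            (D.prec s r ∨ (s.body ∩ I.2).Nonempty)))}

/-- `W_D` for ADL. -/
def WA (D : DTheory A) (I : Interp (Lit A)) : Interp (Lit A) := (TD D I, UA D I)

/-- `W_D` for NDL. -/
def WN (D : DTheory A) (I : Interp (Lit A)) : Interp (Lit A) := (TD D I, UN D I)

/-- `I` is the well-founded model for the operator `W`: the least fixpoint of `W`
(componentwise order). -/
def IsWFModel {L : Type u} (W : Interp L → Interp L) (I : Interp L) : Prop :=
  W I = I ∧ ∀ J, W J = J → I.1 ⊆ J.1 ∧ I.2 ⊆ J.2

/-- A rule of a normal logic program: `head ← pos, ∼neg`. -/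
structure NRule (A : Type u) where
  head : A
  pos : Set A
  neg : Set A

/-- A normal logic program: a set of rules. -/
abbrev NProgram (A : Type u) : Type u := Set (NRule A)

/-- Structural conditions in the definition of a normal logic program: a countable
set of ground rules with finite bodies. -/
def NProgram.WellFormed (P : NProgram A) : Prop :=
  P.Countable ∧ ∀ r ∈ P, r.pos.Finite ∧ r.neg.Finite

/-- The immediate consequence operator `T_Π` on 3-valued interpretations. -/
def TP (P : NProgram A) (I : Interp A) : Set A :=
  {a | ∃ r ∈ P, r.head = a ∧ r.pos ⊆ I.1 ∧ r.neg ⊆ I.2}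

/-- `S` is an unfounded set of program `P` with respect to interpretation `I = ⟨T, F⟩`. -/
def PUnfounded (P : NProgram A) (I : Interp A) (S : Set A) : Prop :=
  ∀ p ∈ S, ∀ r ∈ P, r.head = p →
    (r.pos ∩ (I.2 ∪ S)).Nonempty ∨ (r.neg ∩ I.1).Nonempty

/-- `U_Π(I)`: the greatest unfounded set (union of all unfounded sets). -/
def UP (P : NProgram A) (I : Interp A) : Set A :=
  ⋃₀ {S | PUnfounded P I S}

/-- `W_Π(I) = ⟨T_Π(I), U_Π(I)⟩`. -/
def WP (P : NProgram A) (I : Interp A) : Interp A := (TP P I, UP P I)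

/-- Transfinite iteration of an operator `W` from `⊥`, taking suprema at limit ordinals. -/
noncomputable def iterW {α : Type*} [CompleteLattice α] (W : α → α) : Ordinal.{0} → α :=
  fun o =>
    Ordinal.limitRecOn (motive := fun _ => α) o ⊥ (fun _ ih => W ih)
      (fun o' _ ih => ⨆ x : Set.Iio o', ih x.1 x.2)

/-- One step of the immediate consequence operator for a set of defeasible-theory rules. -/
def TRstep (R : Set (DRule A)) (S : Set (Lit A)) : Set (Lit A) :=
  {p | ∃ r ∈ R, r.head = p ∧ r.body ⊆ S}

/-- The finite iterates `T_R ↑ n`. -/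
def TRiter (R : Set (DRule A)) : ℕ → Set (Lit A)
  | 0 => ∅
  | n + 1 => TRstep R (TRiter R n)

/-- `Cl(R) = T_R ↑ ω`. -/
def ClR (R : Set (DRule A)) : Set (Lit A) := ⋃ n, TRiter R n

/-- The `α`-reduct `D_α^S` of a defeasible theory. -/
def alphaReduct (D : DTheory A) (S : Set (Lit A)) : Set (DRule A) :=
  D.Rs ∪ {r ∈ D.Rd | ∀ c ∈ D.conflicts, r.head ∈ c → ∃ q ∈ c \ {r.head}, q ∉ S}

/-- The ambiguity-propagating operator `α_D(S) = Cl(D_α^S)`. -/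
def alphaOp (D : DTheory A) (S : Set (Lit A)) : Set (Lit A) := ClR (alphaReduct D S)

/-- The `β`-reduct `D_β^S` of a defeasible theory. -/
def betaReduct (D : DTheory A) (S : Set (Lit A)) : Set (DRule A) :=
  D.Rs ∪ {r ∈ D.Rd | ∀ c ∈ D.conflicts, r.head ∈ c →
    ∃ q ∈ c \ {r.head}, ∀ s ∈ D.rules, s.head = q → (¬ s.body ⊆ S ∨ D.prec s r)}

/-- The ambiguity-blocking operator `β_D(S) = Cl(D_β^S)`. -/
def betaOp (D : DTheory A) (S : Set (Lit A)) : Set (Lit A) := ClR (betaReduct D S)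

/-- `S` is an `α`-stable set of `D`. -/
def AlphaStable (D : DTheory A) (S : Set (Lit A)) : Prop := alphaOp D S = S

/-- `S` is a `β`-stable set of `D`. -/
def BetaStable (D : DTheory A) (S : Set (Lit A)) : Prop := betaOp D S = S

/-- The sequence `X_D↑λ`: `X↑0 = ∅`, `X↑(λ+1) = β_D(β_D(X↑λ))`, unions at limits. -/
noncomputable def Xseq (D : DTheory A) : Ordinal.{0} → Set (Lit A) :=
  iterW (fun S => betaOp D (betaOp D S))

/-- The Gelfond–Lifschitz reduct `Π^S`. -/
def glReduct (P : NProgram A) (S : Set A) : NProgram A :=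
  {r' | ∃ r ∈ P, r.neg ∩ S = ∅ ∧ r' = NRule.mk r.head r.pos ∅}

/-- One step of the immediate consequence operator for a NAF-free program. -/
def TPstep (P : NProgram A) (S : Set A) : Set A :=
  {a | ∃ r ∈ P, r.head = a ∧ r.pos ⊆ S}

/-- The finite iterates `T_Π ↑ n` of a NAF-free program. -/
def TPiter (P : NProgram A) : ℕ → Set A
  | 0 => ∅
  | n + 1 => TPstep P (TPiter P n)

/-- `Cl(Π) = T_Π ↑ ω`. -/
def ClP (P : NProgram A) : Set A := ⋃ n, TPiter P n

/-- The Gelfond–Lifschitz operator `γ_Π(S) = Cl(Π^S)`. -/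
def gamma (P : NProgram A) (S : Set A) : Set A := ClP (glReduct P S)

/-- `S` is a stable model of `P`. -/
def StableModel (P : NProgram A) (S : Set A) : Prop := gamma P S = S

/-- `Prod(C[p])`: all sets obtained by choosing one literal other than `p` from each
conflict set containing `p`. -/
def ProdC (D : DTheory A) (p : Lit A) : Set (Set (Lit A)) :=
  {Q | ∃ f : Set (Lit A) → Lit A,
    (∀ c ∈ D.conflicts, p ∈ c → f c ∈ c \ {p}) ∧
    Q = f '' {c ∈ D.conflicts | p ∈ c}}

/-- The logic program translation `Π_D` of a defeasible theory `D` (negative literals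
are treated as fresh atoms, so the atoms of the program are the literals of `D`). -/
def lpTrans (D : DTheory A) : NProgram (Lit A) :=
  {r' | ∃ r ∈ D.Rs, r' = NRule.mk r.head r.body ∅} ∪
  {r' | ∃ r ∈ D.Rd, ∃ Q ∈ ProdC D r.head, r' = NRule.mk r.head r.body Q}

/-- The explicit version `Φ` of a normal program `Π`: atoms of `Φ` are the literals
over the atoms of `Π` (`¬p` being a fresh atom). -/
def explicitVer (P : NProgram A) : NProgram (Lit A) :=
  {r' | ∃ r ∈ P, r' = NRule.mk (Lit.pos r.head) (Lit.pos '' r.pos ∪ Lit.neg '' r.neg) ∅} ∪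
  {r' | ∃ p : A, r' = NRule.mk (Lit.neg p) ∅ {Lit.pos p}}

/-- The minimal conflict sets over atom type `A`. -/
def CMin (A : Type u) : Set (Set (Lit A)) :=
  {c | ∃ p : A, c = ({Lit.pos p, Lit.neg p} : Set (Lit A))}

/-- The defeasible theory translation `D_Π` of a normal program `Π`: each program rule
becomes a strict rule (default literals `∼b` becoming negative literals `¬b`), and each
atom `p` yields a presumption `∅ ⇒ ¬p`; conflict sets are minimal and `≺` is empty. -/
def dtTrans (P : NProgram A) : DTheory A :=
  { rules :=
      {e | ∃ r ∈ P, e = DRule.mk RuleKind.strict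
            (Lit.pos '' r.pos ∪ Lit.neg '' r.neg) (Lit.pos r.head)} ∪
      {e | ∃ p : A, e = DRule.mk RuleKind.defeasible ∅ (Lit.neg p)}
    conflicts := CMin A
    prec := fun _ _ => False }

/-- `M^¬ = M ∪ {¬p : p ∉ M}`, atoms being identified with positive literals. -/
def negCompl (M : Set A) : Set (Lit A) :=
  Lit.pos '' M ∪ Lit.neg '' {p | p ∉ M}

end DLWFS

/-!
If `p` were not true in the well-founded model, the greatest unfounded set `F_WF`, which
contains `p̄`, constrains every rule for `p̄`: a strict one has a false body, and a
defeasible one either has a false body or is overridden through its only conflict set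
`{p̄, p}` — which, with `≺ = ∅`, needs a strict rule for `p` with true body, making `p` true
after all. As there are no defeaters, every rule for `p̄` then has a false body, so `r` is a
witness of provability for `p`.
-/

namespace DLWFS

namespace Lit

variable {A : Type*}

@[simp]
lemma compl_compl (p : Lit A) : p.compl.compl = p := by
  cases p <;> rfl

lemma compl_ne_self (p : Lit A) : p.compl ≠ p := by
  cases p <;> simp [compl]

end Lit

section Completeness

variable {A : Type*} {D : DTheory A}

lemma DTheory.MinimalConflicts.eq_pair (hmin : D.MinimalConflicts) {c : Set (Lit A)}
    (hc : c ∈ D.conflicts) {p : Lit A} (hp : p ∈ c) : c = {p, p.compl} := by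
  rw [hmin] at hc
  obtain ⟨a, rfl⟩ := hc
  rcases hp with rfl | rfl
  · rfl
  · exact Set.pair_comm _ _

lemma DTheory.MinimalConflicts.sdiff_singleton (hmin : D.MinimalConflicts) {c : Set (Lit A)}
    (hc : c ∈ D.conflicts) {p : Lit A} (hp : p ∈ c) : c \ {p} = {p.compl} := by
  rw [hmin.eq_pair hc hp, Set.pair_sdiff_left (p.compl_ne_self).symm]

lemma ADLUnfounded.subset_UA {I : Interp (Lit A)} {S : Set (Lit A)}
    (hS : ADLUnfounded D I S) : S ⊆ UA D I :=
  Set.subset_sUnion_of_mem hS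

lemma adlUnfounded_UA (I : Interp (Lit A)) : ADLUnfounded D I (UA D I) := by
  rintro p ⟨S, hS, hpS⟩
  have widen : ∀ b : Set (Lit A), (b ∩ (I.2 ∪ S)).Nonempty → (b ∩ (I.2 ∪ UA D I)).Nonempty :=
    fun _ hb =>
      hb.mono (Set.inter_subset_inter_right _ (Set.union_subset_union_right _ hS.subset_UA))
  refine ⟨fun r hr hrp => widen _ ((hS p hpS).1 r hr hrp), fun r hr hrp => ?_⟩
  exact ((hS p hpS).2 r hr hrp).imp_left (widen _)

lemma mem_TD_of_strict {I : Interp (Lit A)} {r : DRule A} (hr : r ∈ D.Rs)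
    (hbody : r.body ⊆ I.1) : r.head ∈ TD D I :=
  ⟨r, hr.1, rfl, hbody, Or.inl hr.2⟩

lemma body_inter_nonempty_of_compl_mem_unfounded (hru : D.Ru = ∅)
    (hprec : ∀ r s, ¬ D.prec r s) (hmin : D.MinimalConflicts) {I : Interp (Lit A)}
    {S : Set (Lit A)} (hS : ADLUnfounded D I S) {p : Lit A} (hpS : p.compl ∈ S)
    (hp : p ∉ TD D I) {s : DRule A} (hs : s ∈ D.rules) (hsh : s.head = p.compl) :
    (s.body ∩ (I.2 ∪ S)).Nonempty := by
  rcases hk : s.kind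
  · exact (hS _ hpS).1 s ⟨hs, hk⟩ hsh
  · rcases (hS _ hpS).2 s ⟨hs, hk⟩ hsh with h | ⟨c, hc, hpc, hoverride⟩
    · exact h
    have hpc' : p ∈ c \ {p.compl} := by
      rw [hmin.sdiff_singleton hc hpc, Lit.compl_compl]
      exact Set.mem_singleton p
    obtain ⟨t, ht, rfl, htb, hst | htk⟩ := hoverride p hpc'
    · exact (hprec s t hst).elim
    · exact (hp (mem_TD_of_strict ⟨ht, htk⟩ htb)).elim
  · have : s ∈ D.Ru := ⟨hs, hk⟩
    simp [hru] at this

lemma mem_TD_of_compl_mem_fixpoint (hru : D.Ru = ∅) (hprec : ∀ r s, ¬ D.prec r s)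
    (hmin : D.MinimalConflicts) {I : Interp (Lit A)} (hF : UA D I = I.2)
    {r : DRule A} (hr : r ∈ D.Rd) (hbody : r.body ⊆ I.1) (hcompl : r.head.compl ∈ I.2) :
    r.head ∈ TD D I := by
  by_contra hp
  have hU : ADLUnfounded D I I.2 := hF ▸ adlUnfounded_UA I
  refine hp ⟨r, hr.1, rfl, hbody, Or.inr ⟨hr.2, fun c hc hpc => ⟨r.head.compl, ?_, ?_⟩⟩⟩
  · rw [hmin.sdiff_singleton hc hpc]
    exact Set.mem_singleton _
  · intro s hs hsh
    have h := body_inter_nonempty_of_compl_mem_unfounded hru hprec hmin hU hcompl hp hs hsh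
    exact Or.inr (by rwa [Set.union_self] at h)

end Completeness

theorem adl_completeness_lemma_general {A : Type*} (D : DTheory A)
    (hru : D.Ru = ∅)
    (hprec : ∀ r s, ¬ D.prec r s)
    (hmin : D.MinimalConflicts)
    (I : Interp (Lit A)) (hI : IsWFModel (WA D) I) :
    ∀ p : Lit A, ∀ r ∈ D.Rd, r.head = p → r.body ⊆ I.1 → p.compl ∈ I.2 → p ∈ I.1 := by
  rintro _ r hr rfl hbody hcompl
  have hT : TD D I = I.1 := congrArg Prod.fst hI.1
  have hF : UA D I = I.2 := congrArg Prod.snd hI.1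
  exact hT ▸ mem_TD_of_compl_mem_fixpoint hru hprec hmin hF hr hbody hcompl

/-- Let `D = ⟨R, C, ∅⟩` be a defeasible theory with `R_u = ∅` and minimal conflict
sets, and let `⟨T_WF, F_WF⟩` be its well-founded model under ADL. For every literal `p`:
if some defeasible rule `r ∈ R_d[p]` has `body(r) ⊆ T_WF` and `p̄ ∈ F_WF`, then
`p ∈ T_WF`. -/
theorem adl_completeness_lemma {A : Type*} (D : DTheory A)
    (hwf : D.WellFormed)
    (hru : D.Ru = ∅)
    (hprec : ∀ r s, ¬ D.prec r s)
    (hmin : D.MinimalConflicts)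
    (I : Interp (Lit A)) (hI : IsWFModel (WA D) I) :
    ∀ p : Lit A, ∀ r ∈ D.Rd, r.head = p → r.body ⊆ I.1 → p.compl ∈ I.2 → p ∈ I.1 :=
  adl_completeness_lemma_general D hru hprec hmin I hI

end DLWFS
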